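/- arXiv:1201.0311 — 2 statements merged into one kernel-verified Lean document; each statement's English description precedes it below -/
import Mathlib

section
/- Let μ be a probability measure on ℝ with μ((−∞, 0)) = 0 and μ({0}) < 1. Then the function Ψ_μ(z) = ∫_[0,∞) zx/(1 − zx) dμ(x) is injective on the open left half-plane {z ∈ ℂ : Re z < 0}, and for every z with Re z < 0 the value Ψ_μ(z) lies in the open disk with diameter (μ({0}) − 1, 0), i.e. |Ψ_μ(z) − (μ({0}) − 1)/2| < (1 − μ({0}))/2. -/
open MeasureTheory Set ComplexConjugate

/-!
As `μ` gives no mass to `(-∞, 0)` and the integrand vanishes at `x = 0`, `Ψ_μ` is an integral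
over `(0, ∞)`, a set of mass `1 - μ{0} > 0`. For `Re w < 0` the Möbius map `w ↦ w / (1 - w)`
lands in the open disk of radius `1/2` about `-1/2`; averaging over `(0, ∞)` with `w = z x`
gives the open disk of radius `(1 - μ{0}) / 2` about `-(1 - μ{0}) / 2`.

For injectivity, `Ψ_μ z₁ - Ψ_μ z₂ = (z₁ - z₂) ∫ x / ((1 - z₁ x) (1 - z₂ x)) dμ`. Both factors
`1 - zᵢ x` lie in the right half-plane, and as `x` runs over `(0, ∞)` their product stays in a
fixed open half-plane `{Re (c ·) > 0}`: the right one unless `Im z₁` and `Im z₂` have the same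
strict sign, the upper or lower one otherwise. Hence the integral does not vanish.
-/

namespace Complex

variable {w w₁ w₂ : ℂ}

lemma norm_le_norm_one_sub (hw : w.re ≤ 0) : ‖w‖ ≤ ‖1 - w‖ := by
  rw [← sq_le_sq₀ (norm_nonneg _) (norm_nonneg _), ← normSq_eq_norm_sq, ← normSq_eq_norm_sq]
  simp only [normSq_apply, sub_re, sub_im, one_re, one_im]
  nlinarith

lemma norm_one_add_lt_norm_one_sub (hw : w.re < 0) : ‖1 + w‖ < ‖1 - w‖ := by
  rw [← sq_lt_sq₀ (norm_nonneg _) (norm_nonneg _), ← normSq_eq_norm_sq, ← normSq_eq_norm_sq]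
  simp only [normSq_apply, add_re, add_im, sub_re, sub_im, one_re, one_im]
  nlinarith

lemma re_mul_ofReal_nonpos {z : ℂ} {x : ℝ} (hz : z.re ≤ 0) (hx : 0 ≤ x) :
    (z * x).re ≤ 0 := by
  rw [re_mul_ofReal]
  exact mul_nonpos_of_nonpos_of_nonneg hz hx

lemma one_le_re_one_sub (hw : w.re ≤ 0) : 1 ≤ (1 - w).re := by
  rw [sub_re, one_re]
  linarith

lemma one_sub_ne_zero_of_re_nonpos (hw : w.re ≤ 0) : 1 - w ≠ 0 :=
  ne_zero_of_re_pos (one_pos.trans_le (one_le_re_one_sub hw))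

lemma norm_div_one_sub_le_one (hw : w.re ≤ 0) : ‖w / (1 - w)‖ ≤ 1 := by
  rw [norm_div]
  exact div_le_one_of_le₀ (norm_le_norm_one_sub hw) (norm_nonneg _)

lemma norm_div_one_sub_add_half_lt (hw : w.re < 0) : ‖w / (1 - w) + 1 / 2‖ < 1 / 2 := by
  have hne := one_sub_ne_zero_of_re_nonpos hw.le
  have : w / (1 - w) + 1 / 2 = (1 + w) / (2 * (1 - w)) := by field_simp; ring
  rw [this, norm_div, norm_mul, Complex.norm_two, div_lt_iff₀ (by positivity)]
  linarith [norm_one_add_lt_norm_one_sub hw]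

lemma div_one_sub_sub_div_one_sub (h₁ : 1 - w₁ ≠ 0) (h₂ : 1 - w₂ ≠ 0) :
    w₁ / (1 - w₁) - w₂ / (1 - w₂) = (w₁ - w₂) / ((1 - w₁) * (1 - w₂)) := by
  field_simp
  ring

lemma re_conj_div_pos_of_re_mul_pos {c w : ℂ} (h : 0 < (c * w).re) : 0 < (conj c / w).re := by
  have hw : w ≠ 0 := by rintro rfl; simp at h
  rw [div_eq_mul_inv, inv_def, ← mul_assoc, re_mul_ofReal, ← map_mul, conj_re]
  exact mul_pos h (inv_pos.2 (normSq_pos.2 hw))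

lemma re_mul_pos_of_im_mul_im_nonpos {a b : ℂ} (ha : 0 < a.re) (hb : 0 < b.re)
    (h : a.im * b.im ≤ 0) : 0 < (a * b).re := by
  rw [mul_re]
  nlinarith [mul_pos ha hb]

lemma im_mul_im_mul_pos_of_im_mul_im_pos {a b : ℂ} (ha : 0 < a.re) (hb : 0 < b.re)
    (h : 0 < a.im * b.im) : 0 < a.im * (a * b).im := by
  rw [mul_im]
  nlinarith [mul_pos ha h, mul_pos hb (mul_self_pos.2 (left_ne_zero_of_mul h.ne'))]

lemma exists_forall_re_mul_pos {z₁ z₂ : ℂ} (h₁ : z₁.re < 0) (h₂ : z₂.re < 0) :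
    ∃ c : ℂ, ∀ x : ℝ, 0 < x → 0 < (c * ((1 - z₁ * x) * (1 - z₂ * x))).re := by
  have hre {z : ℂ} (hz : z.re < 0) {x : ℝ} (hx : 0 < x) : 0 < (1 - z * x).re :=
    one_pos.trans_le (one_le_re_one_sub (re_mul_ofReal_nonpos hz.le hx.le))
  have him (x : ℝ) : (1 - z₁ * x).im * (1 - z₂ * x).im = z₁.im * z₂.im * x ^ 2 := by
    simp only [sub_im, one_im, im_mul_ofReal]
    ring
  rcases le_or_gt (z₁.im * z₂.im) 0 with hsign | hsign
  · refine ⟨1, fun x hx => ?_⟩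
    rw [one_mul]
    refine re_mul_pos_of_im_mul_im_nonpos (hre h₁ hx) (hre h₂ hx) ?_
    rw [him]
    exact mul_nonpos_of_nonpos_of_nonneg hsign (sq_nonneg x)
  · refine ⟨I * z₁.im, fun x hx => ?_⟩
    have key := im_mul_im_mul_pos_of_im_mul_im_pos (hre h₁ hx) (hre h₂ hx)
      (by rw [him]; positivity)
    rw [sub_im, one_im, im_mul_ofReal, zero_sub, neg_mul, mul_assoc, neg_pos] at key
    rw [mul_assoc, mul_re, I_re, I_im, zero_mul, one_mul, zero_sub, im_ofReal_mul, neg_pos]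
    nlinarith

end Complex

namespace MeasureTheory

variable {α : Type*} [MeasurableSpace α] {μ : Measure α}

lemma integral_pos_of_ae_pos [NeZero μ] {f : α → ℝ} (hfi : Integrable f μ)
    (hf : ∀ᵐ x ∂μ, 0 < f x) : 0 < ∫ x, f x ∂μ := by
  rw [integral_pos_iff_support_of_nonneg_ae (hf.mono fun _ => le_of_lt) hfi, pos_iff_ne_zero]
  intro h
  obtain ⟨x, hpos, hx⟩ := (hf.and (measure_eq_zero_iff_ae_notMem.1 h)).exists
  exact hx hpos.ne'

lemma norm_integral_lt_of_ae_norm_lt [IsFiniteMeasure μ] [NeZero μ] {E : Type*}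
    [NormedAddCommGroup E] [NormedSpace ℝ E] {f : α → E} {C : ℝ} (hfi : Integrable f μ)
    (hf : ∀ᵐ x ∂μ, ‖f x‖ < C) : ‖∫ x, f x ∂μ‖ < C * μ.real univ := by
  have hgap : 0 < ∫ x, (C - ‖f x‖) ∂μ :=
    integral_pos_of_ae_pos ((integrable_const C).sub hfi.norm) (hf.mono fun _ => sub_pos.2)
  rw [integral_sub (integrable_const C) hfi.norm, integral_const, smul_eq_mul] at hgap
  calc ‖∫ x, f x ∂μ‖ ≤ ∫ x, ‖f x‖ ∂μ := norm_integral_le_integral_norm f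
    _ < C * μ.real univ := by linarith

end MeasureTheory

section HalfLine

variable {μ : Measure ℝ}

lemma integral_eq_setIntegral_Ioi_of_apply_zero {E : Type*} [NormedAddCommGroup E]
    [NormedSpace ℝ E] (hμ : μ (Iio 0) = 0) {f : ℝ → E} (hf : f 0 = 0) :
    ∫ x, f x ∂μ = ∫ x in Ioi 0, f x ∂μ := by
  refine (setIntegral_eq_integral_of_ae_compl_eq_zero ?_).symm
  filter_upwards [measure_eq_zero_iff_ae_notMem.1 hμ] with x hx hx'
  obtain rfl : x = 0 := le_antisymm (not_lt.1 hx') (not_lt.1 hx)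
  exact hf

lemma measure_Ioi_zero_eq_one_sub [IsProbabilityMeasure μ] (hμ : μ (Iio 0) = 0) :
    μ (Ioi 0) = 1 - μ {0} := by
  rw [← compl_Iic, prob_compl_eq_one_sub measurableSet_Iic, ← Iio_union_right,
    measure_union (by simp) (measurableSet_singleton 0), hμ, zero_add]

lemma integrableOn_Ioi_div_one_sub_mul [IsFiniteMeasure μ] {z : ℂ} (hz : z.re ≤ 0) :
    IntegrableOn (fun x : ℝ => z * x / (1 - z * x)) (Ioi 0) μ :=
  Integrable.of_bound (by fun_prop : Measurable _).aestronglyMeasurable 1 <|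
    ae_restrict_of_forall_mem measurableSet_Ioi fun _ hx =>
      Complex.norm_div_one_sub_le_one (Complex.re_mul_ofReal_nonpos hz (le_of_lt hx))

end HalfLine

noncomputable def psiTransform (μ : Measure ℝ) (z : ℂ) : ℂ :=
  ∫ x, z * x / (1 - z * x) ∂μ

section PsiTransform

variable {μ : Measure ℝ}

lemma psiTransform_eq_setIntegral_Ioi (hμ : μ (Iio 0) = 0) (z : ℂ) :
    psiTransform μ z = ∫ x in Ioi 0, z * x / (1 - z * x) ∂μ :=
  integral_eq_setIntegral_Ioi_of_apply_zero hμ (by simp)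

lemma injOn_psiTransform [IsFiniteMeasure μ] (hμ : μ (Iio 0) = 0) (hμ₀ : μ (Ioi 0) ≠ 0) :
    InjOn (psiTransform μ) {z | z.re < 0} := by
  intro z₁ h₁ z₂ h₂ heq
  by_contra hne
  obtain ⟨c, hc⟩ := Complex.exists_forall_re_mul_pos h₁ h₂
  have : NeZero (μ.restrict (Ioi 0)) := ⟨by rwa [Ne, Measure.restrict_eq_zero]⟩
  obtain ⟨d, hd⟩ : ∃ d : ℂ, d * (z₁ - z₂) = conj c :=
    ⟨_, div_mul_cancel₀ _ (sub_ne_zero.2 hne)⟩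
  have hint₁ := integrableOn_Ioi_div_one_sub_mul (μ := μ) h₁.le
  have hint₂ := integrableOn_Ioi_div_one_sub_mul (μ := μ) h₂.le
  have hint : IntegrableOn
      (fun x : ℝ => d * (z₁ * x / (1 - z₁ * x) - z₂ * x / (1 - z₂ * x))) (Ioi 0) μ :=
    (hint₁.sub hint₂).const_mul d
  have hpos : 0 < (d * (psiTransform μ z₁ - psiTransform μ z₂)).re := by
    rw [psiTransform_eq_setIntegral_Ioi hμ, psiTransform_eq_setIntegral_Ioi hμ,
      ← integral_sub hint₁ hint₂, ← integral_const_mul, ← RCLike.re_to_complex,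
      ← integral_re hint]
    refine integral_pos_of_ae_pos hint.re <|
      ae_restrict_of_forall_mem measurableSet_Ioi fun x (hx : 0 < x) => ?_
    have hd₁ := Complex.one_sub_ne_zero_of_re_nonpos (Complex.re_mul_ofReal_nonpos h₁.le hx.le)
    have hd₂ := Complex.one_sub_ne_zero_of_re_nonpos (Complex.re_mul_ofReal_nonpos h₂.le hx.le)
    have hsplit : d * (z₁ * x / (1 - z₁ * x) - z₂ * x / (1 - z₂ * x))
        = conj c / ((1 - z₁ * x) * (1 - z₂ * x)) * x := by
      rw [Complex.div_one_sub_sub_div_one_sub hd₁ hd₂, ← sub_mul, ← hd]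
      ring
    rw [RCLike.re_to_complex, hsplit, Complex.re_mul_ofReal]
    exact mul_pos (Complex.re_conj_div_pos_of_re_mul_pos (hc x hx)) hx
  rw [heq, sub_self, mul_zero, Complex.zero_re] at hpos
  exact lt_irrefl 0 hpos

lemma norm_psiTransform_sub_lt [IsProbabilityMeasure μ] (hμ : μ (Iio 0) = 0)
    (hμ₀ : μ (Ioi 0) ≠ 0) {z : ℂ} (hz : z.re < 0) :
    ‖psiTransform μ z - (((μ.real {0} - 1) / 2 : ℝ) : ℂ)‖ < (1 - μ.real {0}) / 2 := by
  have : NeZero (μ.restrict (Ioi 0)) := ⟨by rwa [Ne, Measure.restrict_eq_zero]⟩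
  have hmass : μ.real (Ioi 0) = 1 - μ.real {0} := by
    rw [measureReal_def, measure_Ioi_zero_eq_one_sub hμ,
      ENNReal.toReal_sub_of_le prob_le_one ENNReal.one_ne_top, ENNReal.toReal_one,
      measureReal_def]
  have hint := integrableOn_Ioi_div_one_sub_mul (μ := μ) hz.le
  have hshift : psiTransform μ z - (((μ.real {0} - 1) / 2 : ℝ) : ℂ)
      = ∫ x in Ioi 0, (z * x / (1 - z * x) + 1 / 2) ∂μ := by
    rw [psiTransform_eq_setIntegral_Ioi hμ, integral_add hint (integrable_const _),
      setIntegral_const, hmass, Complex.real_smul]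
    push_cast
    ring
  have hlt := norm_integral_lt_of_ae_norm_lt (f := fun x : ℝ => z * x / (1 - z * x) + 1 / 2)
    (C := 1 / 2) (hint.add (integrable_const _))
    (ae_restrict_of_forall_mem measurableSet_Ioi fun x (hx : 0 < x) =>
      Complex.norm_div_one_sub_add_half_lt <| by
        rw [Complex.re_mul_ofReal]
        exact mul_neg_of_neg_of_pos hz hx)
  rw [measureReal_restrict_apply_univ, hmass] at hlt
  rw [hshift]
  linarith

end PsiTransform

theorem psi_transform_univalent (μ : Measure ℝ) [IsProbabilityMeasure μ]
    (h : μ (Set.Iio 0) = 0) (h0 : μ {0} < 1) :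
    Set.InjOn (fun z : ℂ => ∫ x, z * (x : ℂ) / (1 - z * (x : ℂ)) ∂μ) {z : ℂ | z.re < 0} ∧
    ∀ z : ℂ, z.re < 0 →
      ‖(∫ x, z * (x : ℂ) / (1 - z * (x : ℂ)) ∂μ) -
          ((((μ {0}).toReal - 1) / 2 : ℝ) : ℂ)‖ < (1 - (μ {0}).toReal) / 2 := by
  have hμ₀ : μ (Ioi 0) ≠ 0 := by
    rw [measure_Ioi_zero_eq_one_sub h]
    exact (tsub_pos_of_lt h0).ne'
  exact ⟨injOn_psiTransform h hμ₀, fun z hz => norm_psiTransform_sub_lt h hμ₀ hz⟩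
end

section
/- Boolean convolution powers preserve positive support: let t > 0, let μ be a probability measure on ℝ with μ((−∞, 0)) = 0, and let ν be a probability measure on ℝ such that for all z ∈ ℂ with Im z > 0, F_ν(z) = (1 − t)·z + t·F_μ(z), where F_λ(z) = ( ∫ (z − s)⁻¹ dλ(s) )⁻¹ denotes the reciprocal Cauchy transform. Then ν((−∞, 0)) = 0. -/
/-!
Write `G` for the Cauchy transform and `F = 1 / G`. Fix `x < 0` and small `y > 0`, `z = x + iy`.
Since `μ` lives on `[0, ∞)`, Jensen's bound `|G_μ|² ≤ ∫ |z - s|⁻² dμ` gives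
`Re F_μ(z) ≤ x`, while `-Im G_μ(z) ≤ y / x²` and `|G_μ(z)| ≥ -Re G_μ(z)` stays bounded below
locally uniformly; hence `Im F_μ(z) = O(y)`. The boolean relation `F_ν = (1 - t) z + t F_μ` passes
both facts to `F_ν`, so `-Im G_ν(z) = Im F_ν / |F_ν|² = O(y)`. As `ν (x - y, x + y) ≤ 2y (-Im G_ν(z))`,
intervals of length `2y` near `x` carry `ν`-mass `O(y²)`, and covering a compact subinterval of
`(-∞, 0)` by `O(1 / y)` of them shows that it is `ν`-null.
-/

open MeasureTheory Complex Set Filter Topology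

noncomputable def cauchyTransform (ρ : Measure ℝ) (z : ℂ) : ℂ :=
  ∫ s, (z - (s : ℂ))⁻¹ ∂ρ

/-- `ν = μ ^ ⊎t`, expressed through the reciprocal Cauchy transforms on the upper half-plane. -/
def IsBooleanPower (t : ℝ) (μ ν : Measure ℝ) : Prop :=
  ∀ z : ℂ, 0 < z.im →
    (cauchyTransform ν z)⁻¹ = ((1 - t : ℝ) : ℂ) * z + (t : ℂ) * (cauchyTransform μ z)⁻¹

section Kernel

variable {z : ℂ}

lemma normSq_sub_ofReal (z : ℂ) (s : ℝ) : normSq (z - s) = (z.re - s) ^ 2 + z.im ^ 2 := by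
  simp only [normSq_apply, sub_re, ofReal_re, sub_im, ofReal_im, sub_zero]
  ring

lemma normSq_sub_ofReal_pos (hz : 0 < z.im) (s : ℝ) : 0 < normSq (z - s) := by
  rw [normSq_sub_ofReal]
  positivity

lemma im_div_normSq_sub_ofReal_pos (hz : 0 < z.im) (s : ℝ) : 0 < z.im / normSq (z - s) :=
  div_pos hz (normSq_sub_ofReal_pos hz s)

lemma inv_sub_ofReal_re (z : ℂ) (s : ℝ) : ((z - s)⁻¹).re = (z.re - s) / normSq (z - s) := by
  simp [inv_re]

lemma inv_sub_ofReal_im (z : ℂ) (s : ℝ) : ((z - s)⁻¹).im = -z.im / normSq (z - s) := by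
  simp [inv_im]

lemma norm_inv_sub_ofReal_le (hz : 0 < z.im) (s : ℝ) : ‖(z - s)⁻¹‖ ≤ z.im⁻¹ := by
  rw [norm_inv]
  refine inv_anti₀ hz ((le_abs_self _).trans ?_)
  simpa using abs_im_le_norm (z - s)

lemma integrable_inv_sub_ofReal (hz : 0 < z.im) (ρ : Measure ℝ) [IsFiniteMeasure ρ] :
    Integrable (fun s : ℝ => (z - s)⁻¹) ρ := by
  refine .of_bound ?_ _ (.of_forall (norm_inv_sub_ofReal_le hz))
  exact ((continuous_const.sub continuous_ofReal).inv₀ fun s => by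
    simpa using (normSq_sub_ofReal_pos hz s).ne').aestronglyMeasurable

end Kernel

section CauchyTransform

variable {ρ : Measure ℝ} [IsFiniteMeasure ρ] {z : ℂ}

lemma cauchyTransform_re (hz : 0 < z.im) :
    (cauchyTransform ρ z).re = ∫ s, (z.re - s) / normSq (z - s) ∂ρ := by
  simp_rw [← inv_sub_ofReal_re]
  exact (integral_re (integrable_inv_sub_ofReal hz ρ)).symm

lemma cauchyTransform_im (hz : 0 < z.im) :
    (cauchyTransform ρ z).im = -∫ s, z.im / normSq (z - s) ∂ρ := by
  simp_rw [← integral_neg, ← neg_div, ← inv_sub_ofReal_im]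
  exact (integral_im (integrable_inv_sub_ofReal hz ρ)).symm

lemma integrable_im_div_normSq_sub_ofReal (hz : 0 < z.im) :
    Integrable (fun s : ℝ => z.im / normSq (z - s)) ρ := by
  simpa [inv_sub_ofReal_im, neg_div] using (integrable_inv_sub_ofReal hz ρ).im.neg

lemma integrable_inv_normSq_sub_ofReal (hz : 0 < z.im) :
    Integrable (fun s : ℝ => (normSq (z - s))⁻¹) ρ := by
  simpa [div_eq_mul_inv, hz.ne'] using
    (integrable_im_div_normSq_sub_ofReal (ρ := ρ) hz).const_mul z.im⁻¹

lemma integrable_re_sub_div_normSq_sub_ofReal (hz : 0 < z.im) :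
    Integrable (fun s : ℝ => (z.re - s) / normSq (z - s)) ρ := by
  simpa [inv_sub_ofReal_re] using (integrable_inv_sub_ofReal hz ρ).re

lemma normSq_cauchyTransform_le [IsProbabilityMeasure ρ] (hz : 0 < z.im) :
    normSq (cauchyTransform ρ z) ≤ ∫ s, (normSq (z - s))⁻¹ ∂ρ := by
  have hsq : ConvexOn ℝ univ fun w : ℂ => ‖w‖ ^ 2 :=
    (convexOn_norm convex_univ).pow (fun _ _ => norm_nonneg _) 2
  have := hsq.map_integral_le (continuous_norm.pow 2).continuousOn isClosed_univ
    (.of_forall fun _ => mem_univ _) (integrable_inv_sub_ofReal hz ρ)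
    (by simpa [Function.comp_def, ← normSq_eq_norm_sq] using integrable_inv_normSq_sub_ofReal hz)
  simpa [← normSq_eq_norm_sq, cauchyTransform] using this

lemma cauchyTransform_im_neg [IsProbabilityMeasure ρ] (hz : 0 < z.im) :
    (cauchyTransform ρ z).im < 0 := by
  rw [cauchyTransform_im hz, neg_lt_zero, integral_pos_iff_support_of_nonneg
    (fun s => (im_div_normSq_sub_ofReal_pos hz s).le) (integrable_im_div_normSq_sub_ofReal hz),
    Function.support_eq_univ fun s => (im_div_normSq_sub_ofReal_pos hz s).ne']
  simp

lemma measure_Ioo_le_mul_neg_cauchyTransform_im (hz : 0 < z.im) :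
    ρ.real (Ioo (z.re - z.im) (z.re + z.im)) ≤ 2 * z.im * -(cauchyTransform ρ z).im := by
  have hkernel : ∀ s ∈ Ioo (z.re - z.im) (z.re + z.im), (2 * z.im)⁻¹ ≤ z.im / normSq (z - s) := by
    rintro s ⟨hs₁, hs₂⟩
    rw [← one_div, div_le_div_iff₀ (by positivity) (normSq_sub_ofReal_pos hz s), normSq_sub_ofReal]
    nlinarith
  calc ρ.real (Ioo (z.re - z.im) (z.re + z.im))
      = 2 * z.im * ((2 * z.im)⁻¹ * ρ.real (Ioo (z.re - z.im) (z.re + z.im))) := by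
        field_simp
    _ ≤ 2 * z.im * ∫ s in Ioo (z.re - z.im) (z.re + z.im), z.im / normSq (z - s) ∂ρ := by
        gcongr
        exact setIntegral_ge_of_const_le_real measurableSet_Ioo (measure_ne_top _ _) hkernel
          (integrable_im_div_normSq_sub_ofReal hz).integrableOn
    _ ≤ 2 * z.im * -(cauchyTransform ρ z).im := by
        rw [cauchyTransform_im hz, neg_neg]
        exact mul_le_mul_of_nonneg_left (setIntegral_le_integral
          (integrable_im_div_normSq_sub_ofReal hz)
          (.of_forall fun s => (im_div_normSq_sub_ofReal_pos hz s).le)) (by positivity)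

end CauchyTransform

section NonnegSupport

variable {μ : Measure ℝ} [IsProbabilityMeasure μ] {z : ℂ}

lemma cauchyTransform_re_le_mul_normSq (hμ : ∀ᵐ s ∂μ, 0 ≤ s) (hz : 0 < z.im) (hx : z.re ≤ 0) :
    (cauchyTransform μ z).re ≤ z.re * normSq (cauchyTransform μ z) :=
  calc (cauchyTransform μ z).re = ∫ s, (z.re - s) / normSq (z - s) ∂μ := cauchyTransform_re hz
    _ ≤ ∫ s, z.re * (normSq (z - s))⁻¹ ∂μ := by
        refine integral_mono_ae (integrable_re_sub_div_normSq_sub_ofReal hz)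
          ((integrable_inv_normSq_sub_ofReal hz).const_mul _) ?_
        filter_upwards [hμ] with s hs
        rw [← div_eq_mul_inv]
        exact div_le_div_of_nonneg_right (by linarith) (normSq_sub_ofReal_pos hz s).le
    _ = z.re * ∫ s, (normSq (z - s))⁻¹ ∂μ := integral_const_mul _ _
    _ ≤ z.re * normSq (cauchyTransform μ z) :=
        mul_le_mul_of_nonpos_left (normSq_cauchyTransform_le hz) hx

lemma re_inv_cauchyTransform_le (hμ : ∀ᵐ s ∂μ, 0 ≤ s) (hz : 0 < z.im) (hx : z.re ≤ 0) :
    ((cauchyTransform μ z)⁻¹).re ≤ z.re := by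
  have hG : 0 < normSq (cauchyTransform μ z) :=
    normSq_pos.2 fun h => (cauchyTransform_im_neg hz).ne (by rw [h, zero_im])
  rw [inv_re, div_le_iff₀ hG]
  exact cauchyTransform_re_le_mul_normSq hμ hz hx

lemma neg_cauchyTransform_im_le (hμ : ∀ᵐ s ∂μ, 0 ≤ s) (hz : 0 < z.im) (hx : z.re < 0) :
    -(cauchyTransform μ z).im ≤ z.im / z.re ^ 2 := by
  rw [cauchyTransform_im hz, neg_neg]
  calc ∫ s, z.im / normSq (z - s) ∂μ ≤ ∫ _s, z.im / z.re ^ 2 ∂μ := by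
        refine integral_mono_ae (integrable_im_div_normSq_sub_ofReal hz) (integrable_const _) ?_
        filter_upwards [hμ] with s hs
        refine div_le_div_of_nonneg_left hz.le (by nlinarith) ?_
        rw [normSq_sub_ofReal]
        nlinarith
    _ = z.im / z.re ^ 2 := by simp

lemma cauchyTransform_re_le_neg_mul_measure_Icc (hμ : ∀ᵐ s ∂μ, 0 ≤ s) (hz : 0 < z.im)
    (hx : z.re < 0) (M : ℝ) :
    (cauchyTransform μ z).re ≤ -(μ.real (Icc 0 M) * (-z.re / ((M - z.re) ^ 2 + z.im ^ 2))) := by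
  have hint : Integrable (fun s : ℝ => -((z.re - s) / normSq (z - s))) μ :=
    (integrable_re_sub_div_normSq_sub_ofReal hz).neg
  have hmass : μ.real (Icc 0 M) * (-z.re / ((M - z.re) ^ 2 + z.im ^ 2)) ≤
      ∫ s in Icc 0 M, -((z.re - s) / normSq (z - s)) ∂μ := by
    rw [mul_comm]
    refine setIntegral_ge_of_const_le_real measurableSet_Icc (measure_ne_top _ _) ?_
      hint.integrableOn
    rintro s ⟨hs₀, hsM⟩
    rw [← neg_div, neg_sub, normSq_sub_ofReal]
    exact div_le_div₀ (by linarith) (by linarith) (by positivity) (by nlinarith)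
  have htail : ∫ s in Icc 0 M, -((z.re - s) / normSq (z - s)) ∂μ ≤
      -(cauchyTransform μ z).re := by
    rw [cauchyTransform_re hz, ← integral_neg]
    refine setIntegral_le_integral hint ?_
    filter_upwards [hμ] with s hs
    exact neg_nonneg.2 (div_nonpos_of_nonpos_of_nonneg (by linarith)
      (normSq_sub_ofReal_pos hz s).le)
  linarith

lemma im_inv_cauchyTransform_le (hμ : ∀ᵐ s ∂μ, 0 ≤ s) (hz : 0 < z.im) (hx : z.re < 0) {c : ℝ}
    (hc : 0 < c) (hGc : (cauchyTransform μ z).re ≤ -c) :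
    ((cauchyTransform μ z)⁻¹).im ≤ z.im / z.re ^ 2 / c ^ 2 := by
  have hc2 : c ^ 2 ≤ normSq (cauchyTransform μ z) := by
    rw [normSq_apply]
    nlinarith [mul_self_nonneg (cauchyTransform μ z).im]
  rw [inv_im]
  exact div_le_div₀ (by positivity) (neg_cauchyTransform_im_le hμ hz hx) (by positivity) hc2

lemma exists_pos_forall_cauchyTransform_re_le (hμ : ∀ᵐ s ∂μ, 0 ≤ s) {a b : ℝ} (hb : b < 0) :
    ∃ c > 0, ∀ z : ℂ, 0 < z.im → z.im ≤ -b → z.re ∈ Icc a b →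
      (cauchyTransform μ z).re ≤ -c := by
  have hIcc : ∀ M, μ (Icc 0 M) = μ (Iic M) := fun M => by
    rw [← Ici_inter_Iic, inter_comm, measure_inter_conull]
    rw [compl_Ici]
    exact measure_mono_null (fun s (hs : s < 0) => not_le.2 hs) (ae_iff.1 hμ)
  obtain ⟨M, hM, hM₀⟩ : ∃ M, 0 < μ (Icc 0 M) ∧ 0 ≤ M := by
    simp_rw [hIcc]
    exact (((tendsto_measure_Iic_atTop μ).eventually_const_lt (by simp)).and
      (eventually_ge_atTop 0)).exists
  have hm : 0 < μ.real (Icc 0 M) := ENNReal.toReal_pos hM.ne' (measure_ne_top _ _)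
  refine ⟨μ.real (Icc 0 M) * (-b / ((M - a) ^ 2 + b ^ 2)),
    mul_pos hm (div_pos (by linarith) (by nlinarith)),
    fun z hz hzb ⟨hax, hxb⟩ => ?_⟩
  refine (cauchyTransform_re_le_neg_mul_measure_Icc hμ hz (by linarith) M).trans
    (neg_le_neg (mul_le_mul_of_nonneg_left ?_ hm.le))
  exact div_le_div₀ (by linarith) (by linarith) (by positivity) (by nlinarith)

end NonnegSupport

lemma neg_im_le_div_sq_of_inv_re_le {w : ℂ} {x B : ℝ} (hx : x < 0) (hre : w⁻¹.re ≤ x)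
    (hB : 0 ≤ B) (him : w⁻¹.im ≤ B) : -w.im ≤ B / x ^ 2 := by
  obtain ⟨u, rfl⟩ : ∃ u, w = u⁻¹ := ⟨w⁻¹, (inv_inv w).symm⟩
  rw [inv_inv] at hre him
  rw [inv_im, neg_div, neg_neg]
  rcases le_or_gt u.im 0 with hu | hu
  · exact (div_nonpos_of_nonpos_of_nonneg hu (normSq_nonneg u)).trans (by positivity)
  · refine div_le_div₀ hB him (by nlinarith) ?_
    rw [normSq_apply]
    nlinarith [mul_self_nonneg u.im]

lemma measure_Ioo_le_of_isBooleanPower {t : ℝ} (ht : 0 ≤ t) {μ ν : Measure ℝ}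
    [IsProbabilityMeasure μ] [IsProbabilityMeasure ν] (hμ : ∀ᵐ s ∂μ, 0 ≤ s)
    (h : IsBooleanPower t μ ν)
    {b c : ℝ} (hb : b < 0) (hc : 0 < c) {z : ℂ} (hz : 0 < z.im) (hzb : z.re ≤ b)
    (hGc : (cauchyTransform μ z).re ≤ -c) :
    ν.real (Ioo (z.re - z.im) (z.re + z.im)) ≤ 2 * (1 + t / (b ^ 2 * c ^ 2)) / b ^ 2 * z.im ^ 2 := by
  have hx : z.re < 0 := hzb.trans_lt hb
  have hbc : 0 < b ^ 2 * c ^ 2 := mul_pos (by nlinarith) (pow_pos hc 2)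
  have hFre : ((cauchyTransform ν z)⁻¹).re ≤ b := by
    have := re_inv_cauchyTransform_le hμ hz hx.le
    rw [h z hz]
    simp only [add_re, re_ofReal_mul]
    nlinarith
  have hFim : ((cauchyTransform ν z)⁻¹).im ≤ z.im * (1 + t / (b ^ 2 * c ^ 2)) := by
    have hμim : ((cauchyTransform μ z)⁻¹).im ≤ z.im / (b ^ 2 * c ^ 2) := by
      refine (im_inv_cauchyTransform_le hμ hz hx hc hGc).trans ?_
      rw [div_div]
      exact div_le_div_of_nonneg_left hz.le hbc
        (mul_le_mul_of_nonneg_right (by nlinarith) (sq_nonneg c))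
    rw [h z hz]
    simp only [add_im, im_ofReal_mul]
    have := mul_le_mul_of_nonneg_left hμim ht
    rw [mul_add, mul_one, mul_div_left_comm]
    nlinarith
  calc ν.real (Ioo (z.re - z.im) (z.re + z.im)) ≤ 2 * z.im * -(cauchyTransform ν z).im :=
        measure_Ioo_le_mul_neg_cauchyTransform_im hz
    _ ≤ 2 * z.im * (z.im * (1 + t / (b ^ 2 * c ^ 2)) / b ^ 2) := by
        gcongr
        exact neg_im_le_div_sq_of_inv_re_le hb hFre (by positivity) hFim
    _ = 2 * (1 + t / (b ^ 2 * c ^ 2)) / b ^ 2 * z.im ^ 2 := by ring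

lemma Icc_subset_biUnion_Ioo {a b w : ℝ} (hw : 0 < w) {N : ℕ} (hN : b - a = N * w) :
    Icc a b ⊆ ⋃ k ∈ Finset.range (N + 1), Ioo (a + k * w - w) (a + k * w + w) := by
  rintro u ⟨hau, hub⟩
  have hk := Nat.floor_le (div_nonneg (sub_nonneg.2 hau) hw.le)
  have hk' := Nat.lt_floor_add_one ((u - a) / w)
  rw [le_div_iff₀ hw] at hk
  rw [div_lt_iff₀ hw] at hk'
  have hkN : ⌊(u - a) / w⌋₊ ≤ N := Nat.floor_le_of_le (by rw [div_le_iff₀ hw]; linarith)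
  exact mem_biUnion (Finset.mem_range.2 (Nat.lt_succ_of_le hkN)) ⟨by linarith, by linarith⟩

lemma measure_Icc_eq_zero_of_measure_Ioo_le {ν : Measure ℝ} [IsFiniteMeasure ν] {a b K δ : ℝ}
    (hab : a < b) (hδ : 0 < δ)
    (h : ∀ x ∈ Icc a b, ∀ y ∈ Ioc 0 δ, ν.real (Ioo (x - y) (x + y)) ≤ K * y ^ 2) :
    ν (Icc a b) = 0 := by
  have hbound : ∀ᶠ N : ℕ in atTop,
      ν.real (Icc a b) ≤ K * (b - a) ^ 2 * ((N : ℝ)⁻¹ * (1 + (N : ℝ)⁻¹)) := by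
    filter_upwards [eventually_gt_atTop 0,
      (tendsto_const_div_atTop_nhds_zero_nat (b - a)).eventually (ge_mem_nhds hδ)] with N hN hNδ
    set w := (b - a) / N with hw_def
    have hN' : (0 : ℝ) < N := by exact_mod_cast hN
    have hw : 0 < w := div_pos (by linarith) hN'
    have hNw : b - a = N * w := by rw [hw_def]; field_simp
    calc ν.real (Icc a b)
        ≤ ν.real (⋃ k ∈ Finset.range (N + 1), Ioo (a + k * w - w) (a + k * w + w)) :=
          measureReal_mono (Icc_subset_biUnion_Ioo hw hNw) (measure_ne_top _ _)
      _ ≤ ∑ k ∈ Finset.range (N + 1), ν.real (Ioo (a + k * w - w) (a + k * w + w)) :=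
          measureReal_biUnion_finset_le _ _
      _ ≤ ∑ k ∈ Finset.range (N + 1), K * w ^ 2 := by
          refine Finset.sum_le_sum fun k hk => h _ ⟨?_, ?_⟩ _ ⟨hw, hNδ⟩
          · have : 0 ≤ (k : ℝ) * w := by positivity
            linarith
          · have : (k : ℝ) ≤ N := by exact_mod_cast Nat.lt_succ_iff.1 (Finset.mem_range.1 hk)
            nlinarith
      _ = K * (b - a) ^ 2 * ((N : ℝ)⁻¹ * (1 + (N : ℝ)⁻¹)) := by
          simp only [Finset.sum_const, Finset.card_range, nsmul_eq_mul, hw_def]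
          push_cast
          field_simp
  have hlim : Tendsto (fun N : ℕ => K * (b - a) ^ 2 * ((N : ℝ)⁻¹ * (1 + (N : ℝ)⁻¹))) atTop (𝓝 0) := by
    simpa using ((tendsto_inv_atTop_nhds_zero_nat (𝕜 := ℝ)).mul
      ((tendsto_inv_atTop_nhds_zero_nat (𝕜 := ℝ)).const_add 1)).const_mul (K * (b - a) ^ 2)
  exact (measureReal_eq_zero_iff (measure_ne_top _ _)).1
    (le_antisymm (ge_of_tendsto hlim hbound) measureReal_nonneg)

theorem boolean_power_preserves_positivity (t : ℝ) (ht : 0 < t) (μ ν : Measure ℝ)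
    [IsProbabilityMeasure μ] [IsProbabilityMeasure ν]
    (hμ : μ (Set.Iio 0) = 0)
    (h : ∀ z : ℂ, 0 < z.im →
      (∫ s, (z - (s : ℂ))⁻¹ ∂ν)⁻¹ =
        ((1 - t : ℝ) : ℂ) * z + (t : ℂ) * (∫ s, (z - (s : ℂ))⁻¹ ∂μ)⁻¹) :
    ν (Set.Iio 0) = 0 := by
  have hμ₀ : ∀ᵐ s ∂μ, 0 ≤ s := ae_iff.2 (measure_mono_null (fun _ => lt_of_not_ge) hμ)
  refine measure_null_of_locally_null _ fun x (hx : x < 0) => ⟨Icc (2 * x) (x / 2),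
    mem_nhdsWithin_of_mem_nhds (Icc_mem_nhds (by linarith) (by linarith)), ?_⟩
  obtain ⟨c, hc, hGc⟩ := exists_pos_forall_cauchyTransform_re_le hμ₀ (a := 2 * x) (b := x / 2)
    (by linarith)
  refine measure_Icc_eq_zero_of_measure_Ioo_le (by linarith) (δ := -(x / 2))
    (K := 2 * (1 + t / ((x / 2) ^ 2 * c ^ 2)) / (x / 2) ^ 2) (by linarith)
    fun x' hx' y hy => ?_
  exact measure_Ioo_le_of_isBooleanPower (z := ⟨x', y⟩) ht.le hμ₀ h (by linarith) hc hy.1 hx'.2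
    (hGc _ hy.1 hy.2 hx')
end
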